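/- arXiv:1402.5705 — 2 statements merged into one kernel-verified Lean document; each statement's English description precedes it below -/
import Mathlib

section
/- For a, b ∈ {1, 2, 3} with a ≠ b and ε ∈ {1, −1}, φ_b(H_a(ε)) = H_a(−ε). -/
open RealInnerProductSpace

/-- An almost contact metric structure `(φ, ξ, η)` together with an almost contact metric
3-structure `(φ_a, ξ_a, η_a)`, `a ∈ {1,2,3}` (indices mod 3), on a real inner product space `V`,
modelling the structures induced on the tangent space of a real hypersurface in the complex
two-plane Grassmannian `G₂(ℂ^{m+2})` by the Kaehler structure `J` and the quaternionic Kaehler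
structure `𝔍`.  Here `η(X) = ⟪ξ, X⟫` and `η_a(X) = ⟪ξ_a, X⟫` are written out via the inner
product. -/
structure ACMS3 (V : Type*) [NormedAddCommGroup V] [InnerProductSpace ℝ V] where
  phi : V →ₗ[ℝ] V
  xi : V
  phiA : Fin 3 → V →ₗ[ℝ] V
  xiA : Fin 3 → V
  xi_unit : ‖xi‖ = 1
  phi_sq : ∀ X : V, phi (phi X) = -X + ⟪xi, X⟫ • xi
  phi_xi : phi xi = 0
  phi_metric : ∀ X Y : V, ⟪phi X, phi Y⟫ = ⟪X, Y⟫ - ⟪xi, X⟫ * ⟪xi, Y⟫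
  xiA_unit : ∀ a, ‖xiA a‖ = 1
  phiA_sq : ∀ a (X : V), phiA a (phiA a X) = -X + ⟪xiA a, X⟫ • xiA a
  phiA_xiA : ∀ a, phiA a (xiA a) = 0
  phiA_metric : ∀ a (X Y : V),
    ⟪phiA a X, phiA a Y⟫ = ⟪X, Y⟫ - ⟪xiA a, X⟫ * ⟪xiA a, Y⟫
  quat1 : ∀ a (X : V), phiA a (phiA (a + 1) X) - ⟪xiA (a + 1), X⟫ • xiA a = phiA (a + 2) X
  quat2 : ∀ a (X : V),
    phiA (a + 2) X = -(phiA (a + 1) (phiA a X)) + ⟪xiA a, X⟫ • xiA (a + 1)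
  quat_xi1 : ∀ a, phiA a (xiA (a + 1)) = xiA (a + 2)
  quat_xi2 : ∀ a, xiA (a + 2) = -(phiA (a + 1) (xiA a))
  rel : ∀ a (X : V), phiA a (phi X) - ⟪xi, X⟫ • xiA a = phi (phiA a X) - ⟪xiA a, X⟫ • xi
  rel_xi : ∀ a, phi (xiA a) = phiA a xi

variable {V : Type*} [NormedAddCommGroup V] [InnerProductSpace ℝ V]

/-- The endomorphism `θ_a X := φ_a φ X − η(X) ξ_a`. -/
noncomputable def ACMS3.theta (S : ACMS3 V) (a : Fin 3) : V →ₗ[ℝ] V where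
  toFun X := S.phiA a (S.phi X) - ⟪S.xi, X⟫ • S.xiA a
  map_add' X Y := by
    simp only [map_add, inner_add_right, add_smul]
    abel
  map_smul' r X := by
    simp only [map_smul, inner_smul_right, RingHom.id_apply, smul_sub, smul_smul]

/-- `H^⊥ = span{ξ, ξ₁, ξ₂, ξ₃, φξ₁, φξ₂, φξ₃}`. -/
noncomputable def ACMS3.Hperp (S : ACMS3 V) : Submodule ℝ V :=
  Submodule.span ℝ {S.xi, S.xiA 0, S.xiA 1, S.xiA 2,
    S.phi (S.xiA 0), S.phi (S.xiA 1), S.phi (S.xiA 2)}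

/-- `H` is the orthogonal complement of `H^⊥` in `V`. -/
noncomputable def ACMS3.H (S : ACMS3 V) : Submodule ℝ V := S.Hperpᗮ

/-- `H_a(ε)`, the eigenspace of `θ_a` restricted to `H` corresponding to the eigenvalue `ε`. -/
noncomputable def ACMS3.eigenH (S : ACMS3 V) (a : Fin 3) (ε : ℝ) : Submodule ℝ V :=
  S.H ⊓ Module.End.eigenspace (S.theta a) ε

/-- The normal Jacobi operator
`R̂_N X = X + 3η(X)ξ + Σ_a (3η_a(X)ξ_a − η(ξ_a)θ_a X + η_a(φX)φξ_a)`. -/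
noncomputable def ACMS3.jacobi (S : ACMS3 V) (X : V) : V :=
  X + (3 * ⟪S.xi, X⟫) • S.xi +
    ∑ a : Fin 3, ((3 * ⟪S.xiA a, X⟫) • S.xiA a
      - ⟪S.xi, S.xiA a⟫ • S.theta a X
      + ⟪S.xiA a, S.phi X⟫ • S.phi (S.xiA a))

/-! On `H` the structure `φ` commutes with every `φ_b`, while `φ_a` and `φ_b` anticommute for
`a ≠ b`; hence `θ_a = φ_a φ` anticommutes with `φ_b` on `H`. As `H` is `φ_b`-invariant and
`φ_b² = -1` there, `φ_b` maps the `ε`-eigenspace of `θ_a` in `H` onto the `-ε`-eigenspace. -/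

structure IsAlmostContactMetric (f : V →ₗ[ℝ] V) (ξ : V) : Prop where
  norm_eq_one : ‖ξ‖ = 1
  apply_apply : ∀ X, f (f X) = -X + ⟪ξ, X⟫ • ξ
  inner_apply_apply : ∀ X Y, ⟪f X, f Y⟫ = ⟪X, Y⟫ - ⟪ξ, X⟫ * ⟪ξ, Y⟫

namespace IsAlmostContactMetric

variable {f : V →ₗ[ℝ] V} {ξ : V}

theorem inner_apply_eq_zero (h : IsAlmostContactMetric f ξ) (X : V) : ⟪ξ, f X⟫ = 0 := by
  have hξ : ⟪ξ, ξ⟫ = 1 := by rw [real_inner_self_eq_norm_sq, h.norm_eq_one, one_pow]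
  -- `‖f (f X)‖² = ‖f X‖² - ⟪ξ, f X⟫²`, while `f (f X) = -X + ⟪ξ, X⟫ ξ` has the norm of `f X`.
  have h₂ := h.inner_apply_apply (f X) (f X)
  have h₁ := h.inner_apply_apply X X
  simp only [h.apply_apply X, inner_add_left, inner_add_right, inner_neg_left, inner_neg_right,
    real_inner_smul_left, real_inner_smul_right, real_inner_comm ξ X, hξ] at h₂
  nlinarith

theorem inner_apply_left (h : IsAlmostContactMetric f ξ) (X Y : V) :
    ⟪f X, Y⟫ = -⟪X, f Y⟫ := by
  have hY : Y = ⟪ξ, Y⟫ • ξ - f (f Y) := by rw [h.apply_apply Y]; abel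
  calc ⟪f X, Y⟫ = ⟪ξ, Y⟫ * ⟪ξ, f X⟫ - ⟪f X, f (f Y)⟫ := by
        conv_lhs => rw [hY]
        rw [inner_sub_right, real_inner_smul_right, real_inner_comm ξ (f X)]
    _ = -⟪X, f Y⟫ := by
        rw [h.inner_apply_apply, h.inner_apply_eq_zero, h.inner_apply_eq_zero]; ring

theorem inner_apply_right (h : IsAlmostContactMetric f ξ) (X Y : V) :
    ⟪X, f Y⟫ = -⟪f X, Y⟫ := by
  rw [h.inner_apply_left, neg_neg]

end IsAlmostContactMetric

theorem Submodule.mem_orthogonal_span_iff {s : Set V} {x : V} :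
    x ∈ (Submodule.span ℝ s)ᗮ ↔ ∀ u ∈ s, ⟪u, x⟫ = 0 := by
  refine ⟨fun h u hu => Submodule.inner_right_of_mem_orthogonal (Submodule.subset_span hu) h,
    fun h u hu => ?_⟩
  have hs : Submodule.span ℝ s ≤ (ℝ ∙ x)ᗮ := Submodule.span_le.2 fun v hv =>
    Submodule.mem_orthogonal_singleton_iff_inner_left.2 (h v hv)
  exact Submodule.mem_orthogonal_singleton_iff_inner_left.1 (hs hu)

namespace ACMS3

variable (S : ACMS3 V)

theorem isAlmostContactMetric_phi : IsAlmostContactMetric S.phi S.xi :=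
  ⟨S.xi_unit, S.phi_sq, S.phi_metric⟩

theorem isAlmostContactMetric_phiA (b : Fin 3) : IsAlmostContactMetric (S.phiA b) (S.xiA b) :=
  ⟨S.xiA_unit b, S.phiA_sq b, S.phiA_metric b⟩

theorem theta_apply (a : Fin 3) (X : V) :
    S.theta a X = S.phiA a (S.phi X) - ⟪S.xi, X⟫ • S.xiA a :=
  rfl

theorem mem_H_iff {x : V} :
    x ∈ S.H ↔ ⟪S.xi, x⟫ = 0 ∧ (∀ c, ⟪S.xiA c, x⟫ = 0) ∧ ∀ c, ⟪S.phi (S.xiA c), x⟫ = 0 := by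
  simp [H, Hperp, Submodule.mem_orthogonal_span_iff, Fin.forall_fin_succ, and_assoc]

theorem exists_phiA_xiA_eq_smul (b c : Fin 3) :
    ∃ (d : Fin 3) (s : ℝ), S.phiA b (S.xiA c) = s • S.xiA d := by
  have hc : ∀ b c : Fin 3, c = b ∨ c = b + 1 ∨ c = b + 2 := by decide
  have h₁ : ∀ b : Fin 3, b + 2 + 1 = b := by decide
  have h₂ : ∀ b : Fin 3, b + 2 + 2 = b + 1 := by decide
  rcases hc b c with e | e | e <;> subst c
  · exact ⟨b, 0, by rw [S.phiA_xiA, zero_smul]⟩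
  · exact ⟨b + 2, 1, by rw [S.quat_xi1, one_smul]⟩
  · refine ⟨b + 1, -1, ?_⟩
    have h := S.quat_xi2 (b + 2)
    rw [h₁, h₂] at h
    rw [h, neg_one_smul, neg_neg]

variable {S}

theorem inner_phiA_xiA_of_mem_H {x : V} (hx : x ∈ S.H) (b c : Fin 3) :
    ⟪S.phiA b (S.xiA c), x⟫ = 0 := by
  obtain ⟨d, s, h⟩ := S.exists_phiA_xiA_eq_smul b c
  rw [h, real_inner_smul_left, (S.mem_H_iff.1 hx).2.1 d, mul_zero]

theorem inner_phi_phiA_xiA_of_mem_H {x : V} (hx : x ∈ S.H) (b c : Fin 3) :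
    ⟪S.phi (S.phiA b (S.xiA c)), x⟫ = 0 := by
  obtain ⟨d, s, h⟩ := S.exists_phiA_xiA_eq_smul b c
  rw [h, map_smul, real_inner_smul_left, (S.mem_H_iff.1 hx).2.2 d, mul_zero]

theorem phiA_mem_H {x : V} (hx : x ∈ S.H) (b : Fin 3) : S.phiA b x ∈ S.H := by
  obtain ⟨hξ, hξA, hφξA⟩ := S.mem_H_iff.1 hx
  have skew := (S.isAlmostContactMetric_phiA b).inner_apply_left
  refine S.mem_H_iff.2 ⟨?_, fun c => ?_, fun c => ?_⟩
  · rw [real_inner_comm, skew, real_inner_comm, ← S.rel_xi, hφξA, neg_zero]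
  · rw [real_inner_comm, skew, real_inner_comm, inner_phiA_xiA_of_mem_H hx, neg_zero]
  · have hrel : S.phiA b (S.phi (S.xiA c)) =
        S.phi (S.phiA b (S.xiA c)) - ⟪S.xiA b, S.xiA c⟫ • S.xi + ⟪S.xi, S.xiA c⟫ • S.xiA b := by
      rw [← S.rel]; abel
    rw [real_inner_comm, skew, real_inner_comm, hrel, inner_add_left, inner_sub_left,
      real_inner_smul_left, real_inner_smul_left, inner_phi_phiA_xiA_of_mem_H hx, hξ, hξA]
    simp

theorem phiA_phiA_of_mem_H {x : V} (hx : x ∈ S.H) (b : Fin 3) : S.phiA b (S.phiA b x) = -x := by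
  rw [S.phiA_sq, (S.mem_H_iff.1 hx).2.1 b, zero_smul, add_zero]

variable (S)

theorem phiA_phiA_add_phiA_phiA {a b : Fin 3} (hab : a ≠ b) (X : V) :
    S.phiA a (S.phiA b X) + S.phiA b (S.phiA a X)
      = ⟪S.xiA b, X⟫ • S.xiA a + ⟪S.xiA a, X⟫ • S.xiA b := by
  have h : ∀ c, S.phiA c (S.phiA (c + 1) X) + S.phiA (c + 1) (S.phiA c X)
      = ⟪S.xiA (c + 1), X⟫ • S.xiA c + ⟪S.xiA c, X⟫ • S.xiA (c + 1) := fun c => by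
    have e₁ : S.phiA c (S.phiA (c + 1) X) = S.phiA (c + 2) X + ⟪S.xiA (c + 1), X⟫ • S.xiA c := by
      rw [← S.quat1 c X]; abel
    have e₂ : S.phiA (c + 1) (S.phiA c X) = ⟪S.xiA c, X⟫ • S.xiA (c + 1) - S.phiA (c + 2) X := by
      rw [S.quat2 c X]; abel
    rw [e₁, e₂]; abel
  have hab' : ∀ a b : Fin 3, a ≠ b → b = a + 1 ∨ a = b + 1 := by decide
  obtain rfl | rfl := hab' a b hab
  · exact h a
  · rw [add_comm, h b, add_comm]

variable {S}

theorem theta_phiA_of_mem_H {a b : Fin 3} (hab : a ≠ b) {x : V} (hx : x ∈ S.H) :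
    S.theta a (S.phiA b x) = -S.phiA b (S.theta a x) := by
  obtain ⟨hξ, hξA, hφξA⟩ := S.mem_H_iff.1 hx
  have hφφA : S.phi (S.phiA b x) = S.phiA b (S.phi x) := by
    rw [← sub_zero (S.phi _), ← zero_smul ℝ S.xi, ← hξA b, ← S.rel, hξ, zero_smul, sub_zero]
  have hξφx : ∀ c, ⟪S.xiA c, S.phi x⟫ = 0 := fun c => by
    rw [S.isAlmostContactMetric_phi.inner_apply_right, hφξA, neg_zero]
  have hanti := S.phiA_phiA_add_phiA_phiA hab (S.phi x)
  rw [hξφx, hξφx, zero_smul, zero_smul, add_zero] at hanti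
  rw [theta_apply, theta_apply, (S.mem_H_iff.1 (phiA_mem_H hx b)).1, hξ, zero_smul,
    sub_zero, sub_zero, hφφA, eq_neg_iff_add_eq_zero, hanti]

theorem phiA_mem_eigenH {a b : Fin 3} (hab : a ≠ b) {ε : ℝ} {x : V} (hx : x ∈ S.eigenH a ε) :
    S.phiA b x ∈ S.eigenH a (-ε) := by
  obtain ⟨hxH, hxε⟩ := Submodule.mem_inf.1 hx
  refine Submodule.mem_inf.2 ⟨phiA_mem_H hxH b, ?_⟩
  rw [Module.End.mem_eigenspace_iff] at hxε ⊢
  rw [theta_phiA_of_mem_H hab hxH, hxε, map_smul, neg_smul]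

end ACMS3

theorem eigenH_phiA_map_general (S : ACMS3 V) (a b : Fin 3) (hab : a ≠ b) (ε : ℝ) :
    (S.eigenH a ε).map (S.phiA b) = S.eigenH a (-ε) := by
  refine le_antisymm (Submodule.map_le_iff_le_comap.2 fun x hx => ACMS3.phiA_mem_eigenH hab hx)
    fun y hy => ⟨-S.phiA b y, ?_, ?_⟩
  · simpa using Submodule.neg_mem _ (ACMS3.phiA_mem_eigenH hab hy)
  · rw [map_neg, ACMS3.phiA_phiA_of_mem_H hy.1, neg_neg]

/-- For `a, b ∈ {1,2,3}` with `a ≠ b` and `ε ∈ {1,−1}`,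
`φ_b(H_a(ε)) = H_a(−ε)`. -/
theorem eigenH_phiA_map [FiniteDimensional ℝ V] (S : ACMS3 V) (a b : Fin 3) (hab : a ≠ b)
    (ε : ℝ) (hε : ε = 1 ∨ ε = -1) :
    (S.eigenH a ε).map (S.phiA b) = S.eigenH a (-ε) :=
  eigenH_phiA_map_general S a b hab ε
end

section
/- Assume η(ξ₂) = η(ξ₃) = 0. Then every Z ∈ H₁(1) satisfies R̂_N Z = (1 − η(ξ₁)) Z and every W ∈ H₁(−1) satisfies R̂_N W = (1 + η(ξ₁)) W; in particular, if η(ξ₁) ≠ 0 these two eigenvalues of R̂_N are distinct. -/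
open RealInnerProductSpace

variable {V : Type*} [NormedAddCommGroup V] [InnerProductSpace ℝ V]

namespace ACMS3

variable (S : ACMS3 V)

lemma inner_xi_self : ⟪S.xi, S.xi⟫ = 1 := by
  rw [real_inner_self_eq_norm_sq, S.xi_unit, one_pow]

-- `‖φ(φX)‖²` is `‖X‖² - η(X)²` by `phi_sq`, and `‖X‖² - η(X)² - η(φX)²` by `phi_metric` twice.
lemma inner_xi_phi (X : V) : ⟪S.xi, S.phi X⟫ = 0 := by
  have hφφ := S.phi_metric (S.phi X) (S.phi X)
  have hφ := S.phi_metric X X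
  have hnorm : ⟪-X + ⟪S.xi, X⟫ • S.xi, -X + ⟪S.xi, X⟫ • S.xi⟫
      = ⟪X, X⟫ - ⟪S.xi, X⟫ * ⟪S.xi, X⟫ := by
    simp only [inner_add_left, inner_add_right, inner_smul_left, inner_smul_right, inner_neg_left,
      inner_neg_right, S.inner_xi_self, real_inner_comm X S.xi, RCLike.conj_to_real]
    ring
  rw [S.phi_sq, hnorm, hφ] at hφφ
  exact mul_self_eq_zero.mp (by linarith)

lemma inner_phi_left (X Y : V) : ⟪S.phi X, Y⟫ = -⟪X, S.phi Y⟫ := by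
  have h := S.phi_metric X (S.phi Y)
  rw [S.phi_sq, S.inner_xi_phi, mul_zero, sub_zero, inner_add_right, inner_neg_right,
    inner_smul_right, real_inner_comm S.xi (S.phi X), S.inner_xi_phi, mul_zero, add_zero] at h
  rw [← h, neg_neg]

lemma xi_mem_Hperp : S.xi ∈ S.Hperp :=
  Submodule.subset_span (by simp)

lemma xiA_mem_Hperp (a : Fin 3) : S.xiA a ∈ S.Hperp :=
  Submodule.subset_span (by fin_cases a <;> simp)

lemma phi_xiA_mem_Hperp (a : Fin 3) : S.phi (S.xiA a) ∈ S.Hperp :=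
  Submodule.subset_span (by fin_cases a <;> simp)

lemma inner_eq_zero_of_mem_H {X Z : V} (hX : X ∈ S.Hperp) (hZ : Z ∈ S.H) : ⟪X, Z⟫ = 0 :=
  (Submodule.mem_orthogonal _ _).mp hZ X hX

lemma inner_xiA_phi_eq_zero_of_mem_H {Z : V} (hZ : Z ∈ S.H) (a : Fin 3) :
    ⟪S.xiA a, S.phi Z⟫ = 0 := by
  rw [← neg_eq_zero, ← S.inner_phi_left]
  exact S.inner_eq_zero_of_mem_H (S.phi_xiA_mem_Hperp a) hZ

lemma jacobi_of_mem_H {Z : V} (hZ : Z ∈ S.H) :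
    S.jacobi Z = Z - ∑ a : Fin 3, ⟪S.xi, S.xiA a⟫ • S.theta a Z := by
  have hxi := S.inner_eq_zero_of_mem_H S.xi_mem_Hperp hZ
  have hxiA a := S.inner_eq_zero_of_mem_H (S.xiA_mem_Hperp a) hZ
  simp only [jacobi, hxi, hxiA, S.inner_xiA_phi_eq_zero_of_mem_H hZ, mul_zero, zero_smul,
    add_zero, zero_add, Finset.sum_neg_distrib, sub_eq_add_neg]

lemma jacobi_of_mem_eigenH {a : Fin 3} (h : ∀ b ≠ a, ⟪S.xi, S.xiA b⟫ = 0) {ε : ℝ} {Z : V}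
    (hZ : Z ∈ S.eigenH a ε) : S.jacobi Z = (1 - ε * ⟪S.xi, S.xiA a⟫) • Z := by
  obtain ⟨hH, hθ⟩ := hZ
  rw [S.jacobi_of_mem_H hH, Finset.sum_eq_single a (fun b _ hb => by rw [h b hb, zero_smul])
    (by simp), Module.End.mem_eigenspace_iff.mp hθ, smul_smul, sub_smul, one_smul, mul_comm]

end ACMS3

theorem jacobi_on_eigenH_one_general (S : ACMS3 V)
    (h2 : ⟪S.xi, S.xiA 1⟫ = 0) (h3 : ⟪S.xi, S.xiA 2⟫ = 0) :
    (∀ Z ∈ S.eigenH 0 1, S.jacobi Z = (1 - ⟪S.xi, S.xiA 0⟫) • Z) ∧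
    (∀ W ∈ S.eigenH 0 (-1), S.jacobi W = (1 + ⟪S.xi, S.xiA 0⟫) • W) ∧
    (⟪S.xi, S.xiA 0⟫ ≠ 0 → (1 - ⟪S.xi, S.xiA 0⟫ : ℝ) ≠ (1 + ⟪S.xi, S.xiA 0⟫ : ℝ)) := by
  have h : ∀ b ≠ (0 : Fin 3), ⟪S.xi, S.xiA b⟫ = 0 := by
    intro b hb
    fin_cases b
    exacts [absurd rfl hb, h2, h3]
  refine ⟨fun Z hZ => ?_, fun W hW => ?_, fun hne heq => hne (by linarith)⟩
  · rw [S.jacobi_of_mem_eigenH h hZ, one_mul]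
  · rw [S.jacobi_of_mem_eigenH h hW, neg_one_mul, sub_neg_eq_add]

/-- Assume `η(ξ₂) = η(ξ₃) = 0`.  Then every `Z ∈ H₁(1)` satisfies
`R̂_N Z = (1 − η(ξ₁)) Z` and every `W ∈ H₁(−1)` satisfies `R̂_N W = (1 + η(ξ₁)) W`; in
particular, if `η(ξ₁) ≠ 0` these two eigenvalues of `R̂_N` are distinct. -/
theorem jacobi_on_eigenH_one [FiniteDimensional ℝ V] (S : ACMS3 V)
    (h2 : ⟪S.xi, S.xiA 1⟫ = 0) (h3 : ⟪S.xi, S.xiA 2⟫ = 0) :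
    (∀ Z ∈ S.eigenH 0 1, S.jacobi Z = (1 - ⟪S.xi, S.xiA 0⟫) • Z) ∧
    (∀ W ∈ S.eigenH 0 (-1), S.jacobi W = (1 + ⟪S.xi, S.xiA 0⟫) • W) ∧
    (⟪S.xi, S.xiA 0⟫ ≠ 0 → (1 - ⟪S.xi, S.xiA 0⟫ : ℝ) ≠ (1 + ⟪S.xi, S.xiA 0⟫ : ℝ)) :=
  jacobi_on_eigenH_one_general S h2 h3
end
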